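/- Suppose d is odd and one of the following holds: (a) η(e0) = η(e1) = η(e2) = 1; (b) exactly two of η(e0), η(e1), η(e2) equal -1 and the third equals 1; or (c) exactly two of η(e0), η(e1), η(e2) equal -1 and the third equals 0. Then the number of points (x0 : x1 : x2) ∈ ℙ²(F_q) with C(x0, x1, x2) = 0 equals (3q² - 12q + 33)/8; equivalently, writing n = (q-1)/2, it equals n(n + q - 1)/2 - 3(n - 2)/2. -/

import Mathlib

open MvPolynomial

/-- The polynomial `C = X0^d + X1^d + X2^d + (e0·X0 + e1·X1 + e2·X2)^d` over `F_q`. -/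
noncomputable def fermatSlice (F : Type) [Field F] (d : ℕ) (e0 e1 e2 : F) :
    MvPolynomial (Fin 3) F :=
  X 0 ^ d + X 1 ^ d + X 2 ^ d +
    (MvPolynomial.C e0 * X 0 + MvPolynomial.C e1 * X 1 + MvPolynomial.C e2 * X 2) ^ d

/-!
Since `x ^ d = η x` in `F_q` and the characteristic exceeds `4`, `(x, y, z)` lies on `C = 0`
exactly when `η x + η y + η z + η (e0 x + e1 y + e2 z) = 0` in `ℤ`. These affine solutions are
counted by summing over `z`, then `y`, then `x`. At each stage the summand depends only on the pair
`(η z, η (c + a z))`, and the number of `z` with a prescribed pair depends only on `q`, `η a`,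
`η (-a)` and `η c`: rescaling `z` by `c` reduces to `c ∈ {0, 1}`, and for `c = 1` the count
follows from the Jacobsthal sum `∑ η z η (1 + a z) = -η a`. What remains is a finite sum over the
character values which, with `η (-1) = -1` as `q ≡ 3 mod 4`, equals
`(q - 1)(3q² - 12q + 33)/8 + 1` in each case; removing the origin and dividing by `q - 1` gives the
projective count.
-/

open Finset
open scoped LinearAlgebra.Projectivization

namespace Projectivization

variable {K V : Type*} [Field K] [AddCommGroup V] [Module K V]

lemma natCard_subtype_ne_zero_and_eq (P : V → Prop)
    (hP : ∀ (c : K) (v : V), c ≠ 0 → (P (c • v) ↔ P v)) :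
    Nat.card {v : V // v ≠ 0 ∧ P v} = Nat.card {x : ℙ K V // P x.rep} * (Nat.card K - 1) := by
  have hrep (w : {v : V // v ≠ 0}) : P (mk K w.1 w.2).rep ↔ P w := by
    obtain ⟨a, ha⟩ := exists_smul_eq_mk_rep K w.1 w.2
    rw [← ha, Units.smul_def, hP _ _ a.ne_zero]
  calc Nat.card {v : V // v ≠ 0 ∧ P v}
      = Nat.card {y : ℙ K V × Kˣ // P y.1.rep} :=
        Nat.card_congr <| (Equiv.subtypeSubtypeEquivSubtypeInter (· ≠ 0) P).symm.trans <|
          (nonZeroEquivProjectivizationProdUnits K V).subtypeEquiv fun w => (hrep w).symm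
    _ = Nat.card {x : ℙ K V // P x.rep} * (Nat.card K - 1) := by
        rw [Nat.card_congr (Equiv.prodSubtypeFstEquivSubtypeProd (p := fun x : ℙ K V => P x.rep)),
          Nat.card_prod, Nat.card_units]

lemma natCard_subtype_eq [Finite V] (P : V → Prop) (h0 : P 0)
    (hP : ∀ (c : K) (v : V), c ≠ 0 → (P (c • v) ↔ P v)) :
    Nat.card {v : V // P v} = Nat.card {x : ℙ K V // P x.rep} * (Nat.card K - 1) + 1 := by
  classical
  have := Fintype.ofFinite V
  rw [← natCard_subtype_ne_zero_and_eq P hP]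
  simp only [Nat.card_eq_fintype_card, Fintype.card_subtype]
  rw [← card_erase_add_one (mem_filter.2 ⟨mem_univ _, h0⟩)]
  congr 2
  ext v
  simp [and_comm]

end Projectivization

lemma Int.cast_eq_zero_iff_of_natAbs_lt {R : Type*} [AddGroupWithOne R] (p : ℕ) [CharP R p]
    {n : ℤ} (h : n.natAbs < p) : (n : R) = 0 ↔ n = 0 := by
  rw [CharP.intCast_eq_zero_iff R p]
  exact ⟨fun hd => Int.eq_zero_of_dvd_of_natAbs_lt_natAbs hd (by simpa using h),
    by rintro rfl; exact dvd_zero _⟩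

lemma Int.cast_inj_of_natAbs_sub_lt {R : Type*} [AddGroupWithOne R] (p : ℕ) [CharP R p]
    {m n : ℤ} (h : (m - n).natAbs < p) : (m : R) = n ↔ m = n := by
  rw [← sub_eq_zero, ← Int.cast_sub, Int.cast_eq_zero_iff_of_natAbs_lt p h, sub_eq_zero]

lemma Finset.card_filter_eq_and {α : Type*} [Fintype α] [DecidableEq α] {Q : Prop} [Decidable Q]
    (z₀ : α) : #{z : α | z = z₀ ∧ Q} = if Q then 1 else 0 := by
  split_ifs with h <;> simp [h, filter_eq']

lemma mul_eq_iff_eq_mul_of_mul_self {M : Type*} [Monoid M] {s x y : M} (hs : s * s = 1) :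
    s * x = y ↔ x = s * y := by
  constructor <;> rintro rfl <;> rw [← mul_assoc, hs, one_mul]

lemma add_mul_eq_zero_iff {F : Type*} [Field F] {a : F} (ha : a ≠ 0) (c z : F) :
    c + a * z = 0 ↔ z = -c / a := by
  rw [eq_div_iff ha, add_eq_zero_iff_eq_neg', mul_comm]

lemma Fintype.sum_comp_add_mul {F M : Type*} [Field F] [Fintype F] [AddCommMonoid M] {a : F}
    (ha : a ≠ 0) (c : F) (f : F → M) : ∑ z, f (c + a * z) = ∑ z, f z :=
  Fintype.sum_equiv ((Equiv.mulLeft₀ a ha).trans (Equiv.addLeft c)) _ _ fun _ => rfl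

def signs : Finset ℤ := {-1, 0, 1}

lemma mul_mem_signs {s i : ℤ} (hs : s ∈ signs) (hi : i ∈ signs) : s * i ∈ signs := by
  simp only [signs, mem_insert, mem_singleton] at hs hi ⊢
  rcases hs with rfl | rfl | rfl <;> rcases hi with rfl | rfl | rfl <;> norm_num

lemma eq_one_or_eq_neg_one_of_mem_signs {i : ℤ} (hi : i ∈ signs) (h0 : i ≠ 0) :
    i = 1 ∨ i = -1 := by
  simp only [signs, mem_insert, mem_singleton] at hi
  omega

lemma two_mul_ite_eq_sq_add {u : ℤ} (hu : u ∈ signs) {i : ℤ} (hi : i = 1 ∨ i = -1) :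
    2 * (if u = i then 1 else 0) = u ^ 2 + i * u := by
  simp only [signs, mem_insert, mem_singleton] at hu
  rcases hu with rfl | rfl | rfl <;> rcases hi with rfl | rfl <;> norm_num

section QuadraticChar

variable {F : Type*} [Field F] [Fintype F] [DecidableEq F]

local notation "η" => quadraticChar F
local notation "q" => Fintype.card F

lemma quadraticChar_mem_signs (x : F) : η x ∈ signs := by
  rcases eq_or_ne x 0 with rfl | hx
  · simp [signs]
  · rcases quadraticChar_dichotomy hx with h | h <;> simp [signs, h]

lemma natAbs_quadraticChar_le_one (x : F) : (η x).natAbs ≤ 1 := by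
  have := quadraticChar_mem_signs x
  simp only [signs, mem_insert, mem_singleton] at this
  omega

lemma quadraticChar_mul_self {c : F} (hc : c ≠ 0) : η c * η c = 1 := by
  rw [← sq, quadraticChar_sq_one hc]

lemma quadraticChar_neg (hneg : η (-1) = -1) (a : F) : η (-a) = -η a := by
  rw [neg_eq_neg_one_mul a, map_mul, hneg, neg_one_mul]

lemma quadraticChar_eq_of_one_add_mul_eq_zero {a z : F} (h : 1 + a * z = 0) :
    η z = η (-a) := by
  have ha : -a ≠ 0 := fun h' => by simp [neg_eq_zero.1 h'] at h
  rw [← mul_one (η (-a)), ← mul_eq_iff_eq_mul_of_mul_self (quadraticChar_mul_self ha), ← map_mul,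
    show -a * z = 1 by linear_combination -h, map_one]

lemma sum_quadraticChar_add_mul (hF : ringChar F ≠ 2) {a : F} (ha : a ≠ 0) (c : F) :
    ∑ z, η (c + a * z) = 0 := by
  rw [Fintype.sum_comp_add_mul ha c (η ·), quadraticChar_sum_zero hF]

lemma sum_quadraticChar_add_mul_sq_mul {a : F} (ha : a ≠ 0) (c : F) (g : F → ℤ) :
    ∑ z, η (c + a * z) ^ 2 * g z = ∑ z, g z - g (-c / a) := by
  have hsq (z : F) : η (c + a * z) ^ 2 = 1 - if z = -c / a then 1 else 0 := by
    split_ifs with h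
    · simp [(add_mul_eq_zero_iff ha c z).2 h]
    · rw [quadraticChar_sq_one (mt (add_mul_eq_zero_iff ha c z).1 h), sub_zero]
  simp only [hsq, sub_mul, one_mul, ite_mul, zero_mul, sum_sub_distrib, sum_ite_eq', mem_univ,
    if_true]

lemma sum_quadraticChar_sq_mul (g : F → ℤ) : ∑ z, η z ^ 2 * g z = ∑ z, g z - g 0 := by
  simpa using sum_quadraticChar_add_mul_sq_mul one_ne_zero (0 : F) g

lemma sum_quadraticChar_sq : ∑ z : F, η z ^ 2 = q - 1 := by
  simpa using sum_quadraticChar_sq_mul (F := F) 1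

lemma sum_quadraticChar_mul_quadraticChar_one_add_mul (hF : ringChar F ≠ 2) {a : F}
    (ha : a ≠ 0) : ∑ z, η z * η (1 + a * z) = -η a := by
  have hjac : ∑ x, η x * η (1 - x) = -η (-1) := by
    have := jacobiSum_nontrivial_inv (quadraticChar_ne_one hF)
    rwa [(quadraticChar_isQuadratic F).inv, jacobiSum] at this
  have hsub : ∑ x, η x * η (1 - x) = η (-a) * ∑ z, η z * η (1 + a * z) := by
    rw [← Fintype.sum_comp_add_mul (neg_ne_zero.2 ha) 0, mul_sum]
    refine sum_congr rfl fun z _ => ?_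
    rw [zero_add, map_mul, show 1 - -a * z = 1 + a * z by ring]
    ring
  calc ∑ z, η z * η (1 + a * z) = η (-a) * (η (-a) * ∑ z, η z * η (1 + a * z)) := by
        rw [← mul_assoc, quadraticChar_mul_self (neg_ne_zero.2 ha), one_mul]
    _ = -(η (-1) * η (-1)) * η a := by
        rw [← hsub, hjac, neg_eq_neg_one_mul a, map_mul]; ring
    _ = -η a := by rw [quadraticChar_mul_self (neg_ne_zero.2 one_ne_zero)]; ring

lemma card_quadraticChar_eq_zero : #{z : F | η z = 0} = 1 := by
  simp only [quadraticChar_eq_zero_iff, filter_eq', mem_univ, if_true, card_singleton]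

lemma two_mul_card_quadraticChar_eq (hF : ringChar F ≠ 2) {i : ℤ} (hi : i = 1 ∨ i = -1) :
    2 * (#{z : F | η z = i} : ℤ) = q - 1 := by
  rw [natCast_card_filter, mul_sum,
    sum_congr rfl fun z _ => two_mul_ite_eq_sq_add (quadraticChar_mem_signs z) hi,
    sum_add_distrib, ← mul_sum, quadraticChar_sum_zero hF, sum_quadraticChar_sq, mul_zero,
    add_zero]

def lineCount (a c : F) (i j : ℤ) : ℕ := #{z | η z = i ∧ η (c + a * z) = j}

lemma sum_eq_sum_lineCount (a c : F) (Φ : ℤ → ℤ → ℚ) :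
    ∑ z, Φ (η z) (η (c + a * z)) = ∑ i ∈ signs, ∑ j ∈ signs, (lineCount a c i j : ℚ) * Φ i j := by
  rw [← sum_product' (f := fun i j => (lineCount a c i j : ℚ) * Φ i j),
    ← sum_fiberwise_of_maps_to (g := fun z => (η z, η (c + a * z))) (t := signs ×ˢ signs)
      fun z _ => mem_product.2 ⟨quadraticChar_mem_signs z, quadraticChar_mem_signs _⟩]
  refine sum_congr rfl fun p _ => ?_
  rw [sum_congr rfl fun z hz => show Φ (η z) (η (c + a * z)) = Φ p.1 p.2 by
    rw [← (mem_filter.1 hz).2], sum_const, nsmul_eq_mul]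
  simp only [lineCount, Prod.ext_iff]

lemma lineCount_zero (a : F) (i j : ℤ) :
    lineCount a 0 i j = if j = η a * i then #{z : F | η z = i} else 0 := by
  unfold lineCount
  split_ifs with h
  · congr 1; ext z
    simp only [mem_filter, mem_univ, true_and, zero_add, map_mul, h, and_iff_left_iff_imp]
    rintro rfl; rfl
  · simp only [zero_add, map_mul, card_eq_zero, filter_eq_empty_iff]
    rintro z - ⟨rfl, rfl⟩
    exact h rfl

lemma lineCount_of_ne_zero (a : F) {c : F} (hc : c ≠ 0) (i j : ℤ) :
    lineCount a c i j = lineCount a 1 (η c * i) (η c * j) := by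
  refine (card_equiv (Equiv.mulLeft₀ c hc) fun t => ?_).symm
  have hct : c + a * (c * t) = c * (1 + a * t) := by ring
  change _ ↔ c * t ∈ _
  simp only [mem_filter, mem_univ, true_and, hct, map_mul,
    mul_eq_iff_eq_mul_of_mul_self (quadraticChar_mul_self hc)]

lemma lineCount_one_left_zero (a : F) (j : ℤ) : lineCount a 1 0 j = if j = 1 then 1 else 0 := by
  rw [lineCount, ← card_filter_eq_and (0 : F)]
  congr 1; ext z
  simp only [mem_filter, mem_univ, true_and, quadraticChar_eq_zero_iff]
  constructor
  · rintro ⟨rfl, h⟩; simpa [eq_comm] using h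
  · rintro ⟨rfl, rfl⟩; simp

lemma lineCount_one_right_zero {a : F} (ha : a ≠ 0) (i : ℤ) :
    lineCount a 1 i 0 = if i = η (-a) then 1 else 0 := by
  rw [lineCount, ← card_filter_eq_and (-1 / a)]
  congr 1; ext z
  have hval := quadraticChar_eq_of_one_add_mul_eq_zero (F := F) (a := a) (z := z)
  simp only [mem_filter, mem_univ, true_and, quadraticChar_eq_zero_iff,
    ← add_mul_eq_zero_iff ha]
  constructor
  · rintro ⟨rfl, h⟩; exact ⟨h, hval h⟩
  · rintro ⟨h, rfl⟩; exact ⟨hval h, h⟩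

lemma four_mul_lineCount_one (hF : ringChar F ≠ 2) {a : F} (ha : a ≠ 0) {i j : ℤ}
    (hi : i = 1 ∨ i = -1) (hj : j = 1 ∨ j = -1) :
    4 * (lineCount a 1 i j : ℤ) = q - 2 - j - i * η (-a) - i * j * η a := by
  have hroot : 1 + a * (-1 / a) = 0 := (add_mul_eq_zero_iff ha 1 _).2 rfl
  have hexpand : 4 * (lineCount a 1 i j : ℤ) = ∑ z, η (1 + a * z) ^ 2 * η z ^ 2
      + j * ∑ z, η z ^ 2 * η (1 + a * z) + i * ∑ z, η (1 + a * z) ^ 2 * η z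
      + i * j * ∑ z, η z * η (1 + a * z) := by
    simp only [lineCount, natCast_card_filter, mul_sum, ite_and, ← sum_add_distrib]
    refine sum_congr rfl fun z _ => ?_
    have h := congr($(two_mul_ite_eq_sq_add (quadraticChar_mem_signs z) hi) *
      $(two_mul_ite_eq_sq_add (quadraticChar_mem_signs (1 + a * z)) hj))
    split_ifs at h ⊢ <;> linear_combination h
  rw [hexpand, sum_quadraticChar_add_mul_sq_mul ha, sum_quadraticChar_sq_mul,
    sum_quadraticChar_add_mul_sq_mul ha, sum_quadraticChar_mul_quadraticChar_one_add_mul hF ha,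
    sum_quadraticChar_sq, sum_quadraticChar_add_mul hF ha, quadraticChar_sum_zero hF,
    quadraticChar_eq_of_one_add_mul_eq_zero hroot, quadraticChar_sq_one (neg_ne_zero.2 ha),
    mul_zero, add_zero, map_one]
  ring

end QuadraticChar

/- `lineCountFormula q (η a) (η (-a)) (η c) i j` is the value of `lineCount a c i j` for `a ≠ 0` and
`i, j ∈ signs`: the case `c = 0` is `lineCountFormulaZero`, and otherwise rescaling by `c` reduces
to `c = 1`, which is `lineCountFormulaOne`. -/

def lineCountFormulaZero (q : ℚ) (e i j : ℤ) : ℚ :=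
  if j = e * i then (if i = 0 then 1 else (q - 1) / 2) else 0

def lineCountFormulaOne (q : ℚ) (e e' i j : ℤ) : ℚ :=
  if i = 0 then (if j = 1 then 1 else 0)
  else if j = 0 then (if i = e' then 1 else 0)
  else (q - 2 - j - i * e' - i * j * e) / 4

def lineCountFormula (q : ℚ) (e e' s i j : ℤ) : ℚ :=
  if s = 0 then lineCountFormulaZero q e i j else lineCountFormulaOne q e e' (s * i) (s * j)

def zeroSumFormula (q : ℚ) (e0 e1 e1' e2 e2' : ℤ) : ℚ :=
  ∑ t ∈ signs, ∑ r ∈ signs, lineCountFormulaZero q e0 t r *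
    ∑ u ∈ signs, ∑ s ∈ signs, lineCountFormula q e1 e1' r u s *
      ∑ i ∈ signs, ∑ j ∈ signs, lineCountFormula q e2 e2' s i j *
        if t + u + i + j = 0 then 1 else 0

lemma zeroSumFormula_one_one_one (q : ℚ) :
    zeroSumFormula q 1 1 (-1) 1 (-1) = (q - 1) * (3 * q ^ 2 - 12 * q + 33) / 8 + 1 := by
  norm_num [zeroSumFormula, signs, lineCountFormula, lineCountFormulaZero, lineCountFormulaOne]
  ring

lemma zeroSumFormula_neg_neg {e0 : ℤ} (he0 : e0 = 1 ∨ e0 = 0) (q : ℚ) :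
    zeroSumFormula q e0 (-1) 1 (-1) 1 = (q - 1) * (3 * q ^ 2 - 12 * q + 33) / 8 + 1 := by
  rcases he0 with rfl | rfl <;>
    norm_num [zeroSumFormula, signs, lineCountFormula, lineCountFormulaZero,
      lineCountFormulaOne] <;>
    ring

section QuadraticChar

variable {F : Type*} [Field F] [Fintype F] [DecidableEq F]

local notation "η" => quadraticChar F
local notation "q" => Fintype.card F

lemma lineCount_zero_eq_formula (hF : ringChar F ≠ 2) (a : F) {i : ℤ} (hi : i ∈ signs) (j : ℤ) :
    (lineCount a 0 i j : ℚ) = lineCountFormulaZero q (η a) i j := by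
  rw [lineCount_zero, lineCountFormulaZero]
  split_ifs with hj hi0
  · rw [hi0, card_quadraticChar_eq_zero, Nat.cast_one]
  · rw [eq_div_iff two_ne_zero, mul_comm]
    exact_mod_cast two_mul_card_quadraticChar_eq hF (eq_one_or_eq_neg_one_of_mem_signs hi hi0)
  · rfl

lemma lineCount_one_eq_formula (hF : ringChar F ≠ 2) {a : F} (ha : a ≠ 0) {i j : ℤ}
    (hi : i ∈ signs) (hj : j ∈ signs) :
    (lineCount a 1 i j : ℚ) = lineCountFormulaOne q (η a) (η (-a)) i j := by
  by_cases hi0 : i = 0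
  · simp only [lineCountFormulaOne, hi0, lineCount_one_left_zero, if_true, Nat.cast_ite,
      Nat.cast_one, Nat.cast_zero]
  by_cases hj0 : j = 0
  · simp only [lineCountFormulaOne, hi0, hj0, lineCount_one_right_zero ha, if_true, if_false,
      Nat.cast_ite, Nat.cast_one, Nat.cast_zero]
  rw [lineCountFormulaOne, if_neg hi0, if_neg hj0, eq_div_iff four_ne_zero, mul_comm]
  exact_mod_cast four_mul_lineCount_one hF ha (eq_one_or_eq_neg_one_of_mem_signs hi hi0)
    (eq_one_or_eq_neg_one_of_mem_signs hj hj0)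

lemma lineCount_eq_formula (hF : ringChar F ≠ 2) {a : F} (ha : a ≠ 0) (c : F) {i j : ℤ}
    (hi : i ∈ signs) (hj : j ∈ signs) :
    (lineCount a c i j : ℚ) = lineCountFormula q (η a) (η (-a)) (η c) i j := by
  rw [lineCountFormula]
  split_ifs with hc
  · rw [quadraticChar_eq_zero_iff.1 hc, lineCount_zero_eq_formula hF a hi]
  · rw [lineCount_of_ne_zero a (mt quadraticChar_eq_zero_iff.2 hc),
      lineCount_one_eq_formula hF ha (mul_mem_signs (quadraticChar_mem_signs c) hi)
        (mul_mem_signs (quadraticChar_mem_signs c) hj)]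

lemma sum_line_eq_formula (hF : ringChar F ≠ 2) {a : F} (ha : a ≠ 0) (c : F)
    (Φ : ℤ → ℤ → ℚ) : ∑ z, Φ (η z) (η (c + a * z)) =
      ∑ i ∈ signs, ∑ j ∈ signs, lineCountFormula q (η a) (η (-a)) (η c) i j * Φ i j := by
  rw [sum_eq_sum_lineCount]
  exact sum_congr rfl fun i hi => sum_congr rfl fun j hj => by
    rw [lineCount_eq_formula hF ha c hi hj]

lemma sum_line_zero_eq_formula (hF : ringChar F ≠ 2) (a : F) (Φ : ℤ → ℤ → ℚ) :
    ∑ z, Φ (η z) (η (a * z)) =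
      ∑ i ∈ signs, ∑ j ∈ signs, lineCountFormulaZero q (η a) i j * Φ i j := by
  have h := sum_eq_sum_lineCount a 0 Φ
  simp only [zero_add] at h
  rw [h]
  exact sum_congr rfl fun i hi => sum_congr rfl fun j _ => by
    rw [lineCount_zero_eq_formula hF a hi]

def zeroSumCount (e0 e1 e2 : F) : ℕ :=
  #{v : F × F × F | η v.1 + η v.2.1 + η v.2.2 + η (e0 * v.1 + e1 * v.2.1 + e2 * v.2.2) = 0}

lemma zeroSumCount_eq_formula (hF : ringChar F ≠ 2) (e0 : F) {e1 e2 : F} (he1 : e1 ≠ 0)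
    (he2 : e2 ≠ 0) :
    (zeroSumCount e0 e1 e2 : ℚ) = zeroSumFormula q (η e0) (η e1) (η (-e1)) (η e2) (η (-e2)) := by
  rw [zeroSumCount, natCast_card_filter, Fintype.sum_prod_type]
  simp_rw [Fintype.sum_prod_type]
  calc _ = ∑ x, ∑ y, ∑ i ∈ signs, ∑ j ∈ signs,
        lineCountFormula q (η e2) (η (-e2)) (η (e0 * x + e1 * y)) i j *
          if η x + η y + i + j = 0 then 1 else 0 :=
        sum_congr rfl fun x _ => sum_congr rfl fun y _ =>
          sum_line_eq_formula hF he2 _ fun i j => if η x + η y + i + j = 0 then 1 else 0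
    _ = ∑ x, ∑ u ∈ signs, ∑ s ∈ signs, lineCountFormula q (η e1) (η (-e1)) (η (e0 * x)) u s *
        ∑ i ∈ signs, ∑ j ∈ signs, lineCountFormula q (η e2) (η (-e2)) s i j *
          if η x + u + i + j = 0 then 1 else 0 :=
        sum_congr rfl fun x _ => sum_line_eq_formula hF he1 _ fun u s =>
          ∑ i ∈ signs, ∑ j ∈ signs,
            lineCountFormula q (η e2) (η (-e2)) s i j * if η x + u + i + j = 0 then 1 else 0
    _ = _ := sum_line_zero_eq_formula hF e0 fun t r => ∑ u ∈ signs, ∑ s ∈ signs,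
        lineCountFormula q (η e1) (η (-e1)) r u s * ∑ i ∈ signs, ∑ j ∈ signs,
          lineCountFormula q (η e2) (η (-e2)) s i j * if t + u + i + j = 0 then 1 else 0

lemma zeroSumCount_swap_left (e0 e1 e2 : F) : zeroSumCount e0 e1 e2 = zeroSumCount e1 e0 e2 := by
  refine card_equiv ⟨fun v => (v.2.1, v.1, v.2.2), fun v => (v.2.1, v.1, v.2.2), fun _ => rfl,
    fun _ => rfl⟩ fun v => ?_
  simp only [mem_filter, mem_univ, true_and, Equiv.coe_fn_mk]
  rw [show e1 * v.2.1 + e0 * v.1 = e0 * v.1 + e1 * v.2.1 by ring]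
  constructor <;> intro h <;> linarith

lemma zeroSumCount_swap_right (e0 e1 e2 : F) :
    zeroSumCount e0 e1 e2 = zeroSumCount e0 e2 e1 := by
  refine card_equiv ⟨fun v => (v.1, v.2.2, v.2.1), fun v => (v.1, v.2.2, v.2.1), fun _ => rfl,
    fun _ => rfl⟩ fun v => ?_
  simp only [mem_filter, mem_univ, true_and, Equiv.coe_fn_mk]
  rw [show e0 * v.1 + e2 * v.2.2 + e1 * v.2.1 = e0 * v.1 + e1 * v.2.1 + e2 * v.2.2 by ring]
  constructor <;> intro h <;> linarith

lemma zeroSumCount_of_one_one_one (hF : ringChar F ≠ 2) (hneg : η (-1) = -1) {e0 e1 e2 : F}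
    (h0 : η e0 = 1) (h1 : η e1 = 1) (h2 : η e2 = 1) :
    (zeroSumCount e0 e1 e2 : ℚ) = (q - 1) * (3 * q ^ 2 - 12 * q + 33) / 8 + 1 := by
  have hne {e : F} (he : η e = 1) : e ≠ 0 := fun h => by simp [h] at he
  rw [zeroSumCount_eq_formula hF e0 (hne h1) (hne h2), quadraticChar_neg hneg,
    quadraticChar_neg hneg, h0, h1, h2]
  exact zeroSumFormula_one_one_one _

lemma zeroSumCount_of_neg_neg (hF : ringChar F ≠ 2) (hneg : η (-1) = -1) {e0 e1 e2 : F}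
    (h0 : η e0 = 1 ∨ e0 = 0) (h1 : η e1 = -1) (h2 : η e2 = -1) :
    (zeroSumCount e0 e1 e2 : ℚ) = (q - 1) * (3 * q ^ 2 - 12 * q + 33) / 8 + 1 := by
  have hne {e : F} (he : η e = -1) : e ≠ 0 := fun h => by simp [h] at he
  rw [zeroSumCount_eq_formula hF e0 (hne h1) (hne h2), quadraticChar_neg hneg,
    quadraticChar_neg hneg, h1, h2]
  refine zeroSumFormula_neg_neg ?_ _
  rcases h0 with h0 | rfl
  · exact Or.inl h0
  · exact Or.inr quadraticChar_zero

lemma zeroSumCount_of_cases (hF : ringChar F ≠ 2) (hneg : η (-1) = -1) {e0 e1 e2 : F}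
    (hcase :
      (η e0 = 1 ∧ η e1 = 1 ∧ η e2 = 1) ∨
      (η e0 = -1 ∧ η e1 = -1 ∧ η e2 = 1) ∨
      (η e0 = -1 ∧ η e1 = 1 ∧ η e2 = -1) ∨
      (η e0 = 1 ∧ η e1 = -1 ∧ η e2 = -1) ∨
      (η e0 = -1 ∧ η e1 = -1 ∧ e2 = 0) ∨
      (η e0 = -1 ∧ e1 = 0 ∧ η e2 = -1) ∨
      (e0 = 0 ∧ η e1 = -1 ∧ η e2 = -1)) :
    (zeroSumCount e0 e1 e2 : ℚ) = (q - 1) * (3 * q ^ 2 - 12 * q + 33) / 8 + 1 := by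
  rcases hcase with ⟨h0, h1, h2⟩ | ⟨h0, h1, h2⟩ | ⟨h0, h1, h2⟩ | ⟨h0, h1, h2⟩ | ⟨h0, h1, h2⟩ |
    ⟨h0, h1, h2⟩ | ⟨h0, h1, h2⟩
  · exact zeroSumCount_of_one_one_one hF hneg h0 h1 h2
  · rw [zeroSumCount_swap_right, zeroSumCount_swap_left]
    exact zeroSumCount_of_neg_neg hF hneg (.inl h2) h0 h1
  · rw [zeroSumCount_swap_left]
    exact zeroSumCount_of_neg_neg hF hneg (.inl h1) h0 h2
  · exact zeroSumCount_of_neg_neg hF hneg (.inl h0) h1 h2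
  · rw [zeroSumCount_swap_right, zeroSumCount_swap_left]
    exact zeroSumCount_of_neg_neg hF hneg (.inr h2) h0 h1
  · rw [zeroSumCount_swap_left]
    exact zeroSumCount_of_neg_neg hF hneg (.inr h1) h0 h2
  · exact zeroSumCount_of_neg_neg hF hneg (.inr h0) h1 h2

end QuadraticChar

section FermatSlice

variable {F : Type} [Field F] {d : ℕ}

lemma eval_fermatSlice (e0 e1 e2 : F) (v : Fin 3 → F) :
    MvPolynomial.eval v (fermatSlice F d e0 e1 e2) =
      v 0 ^ d + v 1 ^ d + v 2 ^ d + (e0 * v 0 + e1 * v 1 + e2 * v 2) ^ d := by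
  simp [fermatSlice]

lemma eval_fermatSlice_smul (e0 e1 e2 c : F) (v : Fin 3 → F) :
    MvPolynomial.eval (c • v) (fermatSlice F d e0 e1 e2) =
      c ^ d * MvPolynomial.eval v (fermatSlice F d e0 e1 e2) := by
  simp only [eval_fermatSlice, Pi.smul_apply, smul_eq_mul]
  rw [show e0 * (c * v 0) + e1 * (c * v 1) + e2 * (c * v 2) =
    c * (e0 * v 0 + e1 * v 1 + e2 * v 2) by ring]
  simp only [mul_pow]
  ring

variable [Fintype F]

lemma natCard_fermatSlice_eq_projective (hd : d ≠ 0) (e0 e1 e2 : F) :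
    Nat.card {v : Fin 3 → F // MvPolynomial.eval v (fermatSlice F d e0 e1 e2) = 0} =
      Nat.card {x : ℙ F (Fin 3 → F) // MvPolynomial.eval x.rep (fermatSlice F d e0 e1 e2) = 0} *
        (Fintype.card F - 1) + 1 := by
  rw [← Nat.card_eq_fintype_card]
  exact Projectivization.natCard_subtype_eq _ (by rw [eval_fermatSlice]; simp [zero_pow hd])
    fun c v hc => by rw [eval_fermatSlice_smul, mul_eq_zero_iff_left (pow_ne_zero _ hc)]

lemma ringChar_ne_two_of_card_eq (hq : Fintype.card F = 2 * d + 1) : ringChar F ≠ 2 := by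
  rw [Ne, FiniteField.even_card_iff_char_two]
  omega

variable [DecidableEq F]

local notation "η" => quadraticChar F

lemma quadraticChar_cast_eq_pow (hq : Fintype.card F = 2 * d + 1) (x : F) :
    ((η x : ℤ) : F) = x ^ d := by
  rw [quadraticChar_eq_pow_of_char_ne_two' (ringChar_ne_two_of_card_eq hq), hq]
  congr 1
  omega

lemma quadraticChar_neg_one_of_card_eq (hq : Fintype.card F = 2 * d + 1) (hd : Odd d) :
    η (-1) = -1 := by
  rw [quadraticChar_neg_one_iff_not_isSquare, FiniteField.isSquare_neg_one_iff]
  obtain ⟨k, rfl⟩ := hd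
  omega

variable (p : ℕ) [CharP F p] (hp : 4 < p) (hq : Fintype.card F = 2 * d + 1)
include hp hq

lemma pow_eq_intCast_iff_quadraticChar_eq {n : ℤ} (hn : n.natAbs ≤ 1) (x : F) :
    x ^ d = n ↔ η x = n := by
  rw [← quadraticChar_cast_eq_pow hq]
  exact Int.cast_inj_of_natAbs_sub_lt p (by have := natAbs_quadraticChar_le_one x; omega)

lemma pow_eq_one_iff_quadraticChar_eq_one (x : F) : x ^ d = 1 ↔ η x = 1 := by
  exact_mod_cast pow_eq_intCast_iff_quadraticChar_eq p hp hq (n := 1) le_rfl x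

lemma pow_eq_neg_one_iff_quadraticChar_eq_neg_one (x : F) : x ^ d = -1 ↔ η x = -1 := by
  exact_mod_cast pow_eq_intCast_iff_quadraticChar_eq p hp hq (n := -1) le_rfl x

lemma eval_fermatSlice_eq_zero_iff (e0 e1 e2 : F) (v : Fin 3 → F) :
    MvPolynomial.eval v (fermatSlice F d e0 e1 e2) = 0 ↔
      η (v 0) + η (v 1) + η (v 2) + η (e0 * v 0 + e1 * v 1 + e2 * v 2) = 0 := by
  simp only [eval_fermatSlice, ← quadraticChar_cast_eq_pow hq]
  exact_mod_cast Int.cast_eq_zero_iff_of_natAbs_lt (R := F) p (by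
    have := natAbs_quadraticChar_le_one (v 0)
    have := natAbs_quadraticChar_le_one (v 1)
    have := natAbs_quadraticChar_le_one (v 2)
    have := natAbs_quadraticChar_le_one (e0 * v 0 + e1 * v 1 + e2 * v 2)
    omega)

lemma natCard_fermatSlice_eq_zeroSumCount (e0 e1 e2 : F) :
    Nat.card {v : Fin 3 → F // MvPolynomial.eval v (fermatSlice F d e0 e1 e2) = 0} =
      zeroSumCount e0 e1 e2 := by
  rw [zeroSumCount, ← Fintype.card_subtype, ← Nat.card_eq_fintype_card]
  exact Nat.card_congr <| ((Fin.consEquiv fun _ => F).symm.trans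
    ((Equiv.refl F).prodCongr (finTwoArrowEquiv F))).subtypeEquiv fun v =>
      eval_fermatSlice_eq_zero_iff p hp hq e0 e1 e2 v

end FermatSlice

theorem statement14_general (p h : ℕ) (hp : Nat.Prime p) (hp3 : 3 < p)
    (F : Type) [Field F] [Fintype F] (hcard : Fintype.card F = p ^ h)
    (d : ℕ) (hd : p ^ h = 2 * d + 1) (hodd : Odd d) (e0 e1 e2 : F)
    (hcase :
      (e0 ^ d = 1 ∧ e1 ^ d = 1 ∧ e2 ^ d = 1) ∨
      (e0 ^ d = -1 ∧ e1 ^ d = -1 ∧ e2 ^ d = 1) ∨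
      (e0 ^ d = -1 ∧ e1 ^ d = 1 ∧ e2 ^ d = -1) ∨
      (e0 ^ d = 1 ∧ e1 ^ d = -1 ∧ e2 ^ d = -1) ∨
      (e0 ^ d = -1 ∧ e1 ^ d = -1 ∧ e2 = 0) ∨
      (e0 ^ d = -1 ∧ e1 = 0 ∧ e2 ^ d = -1) ∨
      (e0 = 0 ∧ e1 ^ d = -1 ∧ e2 ^ d = -1)) :
    (8 * Nat.card {x : Projectivization F (Fin 3 → F) //
        MvPolynomial.eval x.rep (fermatSlice F d e0 e1 e2) = 0} : ℤ) =
      3 * (p ^ h : ℤ) ^ 2 - 12 * (p ^ h : ℤ) + 33 := by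
  classical
  have := Fact.mk hp
  have : CharP F p := charP_of_card_eq_prime_pow hcard
  have hp4 : 4 < p := lt_of_le_of_ne hp3 fun h4 => by subst h4; norm_num at hp
  have hq : Fintype.card F = 2 * d + 1 := hcard.trans hd
  simp only [pow_eq_one_iff_quadraticChar_eq_one p hp4 hq,
    pow_eq_neg_one_iff_quadraticChar_eq_neg_one p hp4 hq] at hcase
  have hcount := zeroSumCount_of_cases (ringChar_ne_two_of_card_eq hq)
    (quadraticChar_neg_one_of_card_eq hq hodd) hcase
  rw [← natCard_fermatSlice_eq_zeroSumCount p hp4 hq,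
    natCard_fermatSlice_eq_projective hodd.pos.ne'] at hcount
  set N := Nat.card {x : Projectivization F (Fin 3 → F) //
    MvPolynomial.eval x.rep (fermatSlice F d e0 e1 e2) = 0}
  have hq1 : (Fintype.card F : ℚ) - 1 ≠ 0 :=
    sub_ne_zero.2 (by exact_mod_cast Fintype.one_lt_card.ne')
  push_cast [Nat.cast_sub Fintype.card_pos] at hcount
  have key : (8 * N : ℚ) = 3 * (Fintype.card F : ℚ) ^ 2 - 12 * Fintype.card F + 33 :=
    mul_right_cancel₀ hq1 (by linear_combination 8 * hcount)
  rw [show (p : ℤ) ^ h = Fintype.card F by rw [hcard]; push_cast; rfl]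
  exact_mod_cast key

/-- If `d` is odd and either (a) `η(e0) = η(e1) = η(e2) = 1`, or (b) exactly
two of `η(e0), η(e1), η(e2)` equal `-1` and the third equals `1`, or (c) exactly two equal
`-1` and the third equals `0`, then the number of points of `ℙ²(F_q)` on the curve `C = 0`
equals `(3q² - 12q + 33)/8` (i.e. `n(n + q - 1)/2 - 3(n - 2)/2` with `n = (q-1)/2`). -/
theorem statement14 (p h : ℕ) (hp : Nat.Prime p) (hp3 : 3 < p) (hh : 0 < h)
    (F : Type) [Field F] [Fintype F] (hcard : Fintype.card F = p ^ h)
    (d : ℕ) (hd : p ^ h = 2 * d + 1) (hodd : Odd d) (e0 e1 e2 : F)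
    (hcase :
      (e0 ^ d = 1 ∧ e1 ^ d = 1 ∧ e2 ^ d = 1) ∨
      (e0 ^ d = -1 ∧ e1 ^ d = -1 ∧ e2 ^ d = 1) ∨
      (e0 ^ d = -1 ∧ e1 ^ d = 1 ∧ e2 ^ d = -1) ∨
      (e0 ^ d = 1 ∧ e1 ^ d = -1 ∧ e2 ^ d = -1) ∨
      (e0 ^ d = -1 ∧ e1 ^ d = -1 ∧ e2 = 0) ∨
      (e0 ^ d = -1 ∧ e1 = 0 ∧ e2 ^ d = -1) ∨
      (e0 = 0 ∧ e1 ^ d = -1 ∧ e2 ^ d = -1)) :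
    (8 * Nat.card {x : Projectivization F (Fin 3 → F) //
        MvPolynomial.eval x.rep (fermatSlice F d e0 e1 e2) = 0} : ℤ) =
      3 * (p ^ h : ℤ) ^ 2 - 12 * (p ^ h : ℤ) + 33 :=
  statement14_general p h hp hp3 F hcard d hd hodd e0 e1 e2 hcase
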